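/- arXiv:1910.10213 — 3 statements merged into one kernel-verified Lean document; each statement's English description precedes it below -/
import Mathlib

section
/- Let λ > 0, θ > 0, γ = √(2λ), δ = √(2λ + 2θγ). For every x ∈ ℝ with x > 0 and every bounded measurable f : ℝ → ℝ, the identity (1/(2δ))∫_ℝ e^{-δ|b|} f(b) db + (θ/(2δ)) ∫_ℝ f(b) ∫_{-∞}^{x} e^{-γ|y| - δ|b - y|} dy db = ∫_ℝ (1/γ) e^{-γ|b|} e_x(b) f(b) db holds, where e_x(b) = e^{-δ|b-x| + γ(|b| - x)} ( sgn(b - x)/4 + γ/(4δ) ) + (1/2)·1_{b < x}. -/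
/-!
For `b ≠ x` the identity already holds pointwise in `b`, before integrating against `f`.
The points `0` and `b` cut `(-∞, x]` into pieces on each of which the kernel
`e^{-γ|y| - δ|b - y|}` is a single exponential `e^{p y + q}`, so the inner integral is an explicit
exponential polynomial; once `θ = (δ² - γ²) / (2γ)` is substituted it collapses to
`(1/γ) e^{-γ|b|} e_x(b)`. Since `γ ≤ δ` makes `e_x` bounded, all integrands are dominated by
multiples of `e^{-γ|b|}`, and the exceptional point `b = x` is null.
-/

open MeasureTheory ProbabilityTheory Real Set Filter

@[fun_prop]
lemma Real.measurable_sign : Measurable Real.sign :=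
  Measurable.ite measurableSet_Iio measurable_const
    (Measurable.ite measurableSet_Ioi measurable_const measurable_const)

lemma integrable_exp_neg_mul_abs {c : ℝ} (hc : 0 < c) :
    Integrable fun y : ℝ => exp (-c * |y|) := by
  rw [← integrableOn_univ, ← Iic_union_Ioi (a := (0 : ℝ))]
  refine IntegrableOn.union ((integrableOn_exp_mul_Iic hc 0).congr_fun (fun y hy => ?_)
    measurableSet_Iic) ((integrableOn_exp_mul_Ioi (neg_neg_of_pos hc) 0).congr_fun
    (fun y hy => ?_) measurableSet_Ioi)
  · rw [abs_of_nonpos hy]; ring_nf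
  · rw [abs_of_pos hy]

lemma integral_exp_mul_add_Iic {p : ℝ} (hp : 0 < p) (q c : ℝ) :
    ∫ y in Iic c, exp (p * y + q) = exp (p * c + q) / p := by
  simp only [exp_add, integral_mul_const, integral_exp_mul_Iic hp]
  ring

lemma integral_eq_of_eqOn_exp_mul_add {f : ℝ → ℝ} {p q s t : ℝ} (hp : p ≠ 0)
    (hf : EqOn f (fun y => exp (p * y + q)) (uIcc s t)) :
    ∫ y in s..t, f y = (exp (p * t + q) - exp (p * s + q)) / p := by
  rw [intervalIntegral.integral_congr hf, intervalIntegral.integral_comp_mul_add exp hp,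
    integral_exp, smul_eq_mul, inv_mul_eq_div]

noncomputable def expAbsKernel (γ δ b y : ℝ) : ℝ := exp (-γ * |y| - δ * |b - y|)

/-- The paper's `e_x(b)`, i.e. `P(X_T < x | B_T = b)`. -/
noncomputable def condProbLt (γ δ x b : ℝ) : ℝ :=
  exp (-δ * |b - x| + γ * (|b| - x)) * (sign (b - x) / 4 + γ / (4 * δ))
    + (if b < x then 1 else 0) / 2

section expAbsKernel

variable {γ δ b : ℝ}

lemma integrable_expAbsKernel (hγ : 0 < γ) (hδ : 0 ≤ δ) (b : ℝ) :
    Integrable (expAbsKernel γ δ b) :=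
  (integrable_exp_neg_mul_abs hγ).mono' (by unfold expAbsKernel; fun_prop)
    (Eventually.of_forall fun y => by
      rw [expAbsKernel, norm_of_nonneg (exp_pos _).le, exp_le_exp]
      nlinarith [abs_nonneg (b - y)])

lemma intervalIntegrable_expAbsKernel (s t : ℝ) :
    IntervalIntegrable (expAbsKernel γ δ b) volume s t :=
  (by unfold expAbsKernel; fun_prop : Continuous _).intervalIntegrable s t

lemma setIntegral_Iic_expAbsKernel_eq_add (hγ : 0 < γ) (hδ : 0 ≤ δ) (a c : ℝ) :
    ∫ y in Iic c, expAbsKernel γ δ b y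
      = (∫ y in Iic a, expAbsKernel γ δ b y) + ∫ y in a..c, expAbsKernel γ δ b y :=
  sub_eq_iff_eq_add'.1 <| intervalIntegral.integral_Iic_sub_Iic
    (integrable_expAbsKernel hγ hδ b).integrableOn
    (integrable_expAbsKernel hγ hδ b).integrableOn

lemma setIntegral_Iic_expAbsKernel (hγδ : 0 < γ + δ) {c : ℝ} (hc : c ≤ 0) (hcb : c ≤ b) :
    ∫ y in Iic c, expAbsKernel γ δ b y = exp ((γ + δ) * c + -δ * b) / (γ + δ) := by
  rw [← integral_exp_mul_add_Iic hγδ]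
  refine setIntegral_congr_fun measurableSet_Iic fun y hy => ?_
  rw [expAbsKernel, abs_of_nonpos ((mem_Iic.1 hy).trans hc),
    abs_of_nonneg (sub_nonneg.2 ((mem_Iic.1 hy).trans hcb))]
  ring_nf

lemma integral_expAbsKernel_of_nonneg_of_le (hγδ : γ ≠ δ) {s t : ℝ}
    (hs : s ∈ Icc 0 b) (ht : t ∈ Icc 0 b) :
    ∫ y in s..t, expAbsKernel γ δ b y
      = (exp ((δ - γ) * t + -δ * b) - exp ((δ - γ) * s + -δ * b)) / (δ - γ) :=
  integral_eq_of_eqOn_exp_mul_add (sub_ne_zero.2 hγδ.symm) fun y hy => by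
    obtain ⟨hy0, hyb⟩ := uIcc_subset_Icc hs ht hy
    rw [expAbsKernel, abs_of_nonneg hy0, abs_of_nonneg (sub_nonneg.2 hyb)]
    ring_nf

lemma integral_expAbsKernel_of_le_of_nonpos (hγδ : γ ≠ δ) {s t : ℝ}
    (hs : s ∈ Icc b 0) (ht : t ∈ Icc b 0) :
    ∫ y in s..t, expAbsKernel γ δ b y
      = (exp ((γ - δ) * t + δ * b) - exp ((γ - δ) * s + δ * b)) / (γ - δ) :=
  integral_eq_of_eqOn_exp_mul_add (sub_ne_zero.2 hγδ) fun y hy => by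
    obtain ⟨hby, hy0⟩ := uIcc_subset_Icc hs ht hy
    rw [expAbsKernel, abs_of_nonpos hy0, abs_of_nonpos (sub_nonpos.2 hby)]
    ring_nf

lemma integral_expAbsKernel_of_max_le (hγδ : γ + δ ≠ 0) {s t : ℝ}
    (hs : max 0 b ≤ s) (ht : max 0 b ≤ t) :
    ∫ y in s..t, expAbsKernel γ δ b y
      = (exp (-(γ + δ) * t + δ * b) - exp (-(γ + δ) * s + δ * b)) / -(γ + δ) :=
  integral_eq_of_eqOn_exp_mul_add (neg_ne_zero.2 hγδ) fun y hy => by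
    have hy' : max 0 b ≤ y := le_inf hs ht |>.trans hy.1
    rw [expAbsKernel, abs_of_nonneg (le_of_max_le_left hy'),
      abs_of_nonpos (sub_nonpos.2 (le_of_max_le_right hy'))]
    ring_nf

end expAbsKernel

lemma condProbLt_density_identity {γ δ θ x b : ℝ} (hγ : 0 < γ) (hδ : 0 < δ)
    (hγδ : γ ≠ δ) (hθ : 2 * γ * θ = δ ^ 2 - γ ^ 2) (hx : 0 < x) (hb : b ≠ x) :
    1 / (2 * δ) * exp (-δ * |b|) + θ / (2 * δ) * ∫ y in Iic x, expAbsKernel γ δ b y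
      = 1 / γ * exp (-γ * |b|) * condProbLt γ δ x b := by
  have hγδ_pos : 0 < γ + δ := add_pos hγ hδ
  have hδγ : δ - γ ≠ 0 := sub_ne_zero.2 hγδ.symm
  have hγδ_sub : γ - δ ≠ 0 := sub_ne_zero.2 hγδ
  obtain rfl : θ = (δ ^ 2 - γ ^ 2) / (2 * γ) := by field_simp; linarith
  have hsplit := setIntegral_Iic_expAbsKernel_eq_add (b := b) hγ hδ.le
  have hadd (a c : ℝ) :
      (∫ y in a..c, expAbsKernel γ δ b y) + ∫ y in c..x, expAbsKernel γ δ b y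
        = ∫ y in a..x, expAbsKernel γ δ b y :=
    intervalIntegral.integral_add_adjacent_intervals (intervalIntegrable_expAbsKernel a c)
      (intervalIntegrable_expAbsKernel c x)
  rcases hb.lt_or_gt with hbx | hxb
  · rw [condProbLt, abs_of_neg (sub_neg.2 hbx), sign_of_neg (sub_neg.2 hbx), if_pos hbx]
    rcases lt_or_ge b 0 with hb0 | hb0
    · rw [hsplit b, ← hadd b 0, setIntegral_Iic_expAbsKernel hγδ_pos hb0.le le_rfl,
        integral_expAbsKernel_of_le_of_nonpos hγδ (left_mem_Icc.2 hb0.le)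
          (right_mem_Icc.2 hb0.le),
        integral_expAbsKernel_of_max_le hγδ_pos.ne' (by simp [hb0.le]) (by simp [hx.le, hb0.le]),
        abs_of_neg hb0]
      field_simp; ring_nf; simp only [exp_sub]; field_simp
    · rw [hsplit 0, ← hadd 0 b, setIntegral_Iic_expAbsKernel hγδ_pos le_rfl hb0,
        integral_expAbsKernel_of_nonneg_of_le hγδ (left_mem_Icc.2 hb0) (right_mem_Icc.2 hb0),
        integral_expAbsKernel_of_max_le hγδ_pos.ne' (by simp [hb0]) (by simp [hbx.le, hx.le]),
        abs_of_nonneg hb0]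
      field_simp; ring_nf; simp only [exp_add, exp_sub, exp_neg]; field_simp
  · have hb0 : 0 < b := hx.trans hxb
    rw [condProbLt, abs_of_pos (sub_pos.2 hxb), sign_of_pos (sub_pos.2 hxb),
      if_neg hxb.not_gt, hsplit 0, setIntegral_Iic_expAbsKernel hγδ_pos le_rfl hb0.le,
      integral_expAbsKernel_of_nonneg_of_le hγδ (left_mem_Icc.2 hb0.le) ⟨hx.le, hxb.le⟩,
      abs_of_pos hb0]
    field_simp; ring_nf; simp only [exp_add, exp_sub, exp_neg]; field_simp

lemma measurable_condProbLt (γ δ x : ℝ) : Measurable (condProbLt γ δ x) :=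
  (by fun_prop : Measurable fun b => exp (-δ * |b - x| + γ * (|b| - x))
      * (sign (b - x) / 4 + γ / (4 * δ))).add
    ((measurable_const.ite measurableSet_Iio measurable_const).div_const 2)

lemma abs_condProbLt_le_one {γ δ x : ℝ} (hγ : 0 ≤ γ) (hγδ : γ ≤ δ) (hx : 0 ≤ x)
    (b : ℝ) :
    |condProbLt γ δ x b| ≤ 1 := by
  have hexp : exp (-δ * |b - x| + γ * (|b| - x)) ≤ 1 := by
    have hb := abs_sub_abs_le_abs_sub b x
    rw [abs_of_nonneg hx] at hb
    rw [exp_le_one_iff]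
    nlinarith [abs_nonneg (b - x)]
  have hratio : γ / (4 * δ) ≤ 1 / 4 :=
    div_le_of_le_mul₀ (by linarith) (by norm_num) (by linarith)
  have hexp_nonneg := (exp_pos (-δ * |b - x| + γ * (|b| - x))).le
  have hratio_nonneg : 0 ≤ γ / (4 * δ) := div_nonneg hγ (by linarith)
  rw [condProbLt, abs_le]
  rcases sign_apply_eq (b - x) with h | h | h <;> rw [h] <;> split_ifs <;> constructor <;> nlinarith

/-- The integral identity establishing `P(X_T < x | B_T = b) = e_x(b)` for `x > 0`. -/
theorem conditional_law_integral_identity_pos (lam θ γ δ : ℝ)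
    (hlam : 0 < lam) (hθ : 0 < θ)
    (hγ : γ = Real.sqrt (2 * lam)) (hδ : δ = Real.sqrt (2 * lam + 2 * θ * γ))
    (x : ℝ) (hx : 0 < x)
    (f : ℝ → ℝ) (hf : Measurable f) (C : ℝ) (hbd : ∀ b, |f b| ≤ C) :
    (1 / (2 * δ)) * (∫ b : ℝ, Real.exp (-δ * |b|) * f b)
      + (θ / (2 * δ)) *
        (∫ b : ℝ, f b * ∫ y in Iic x, Real.exp (-γ * |y| - δ * |b - y|))
    = ∫ b : ℝ, (1 / γ) * Real.exp (-γ * |b|) *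
        (Real.exp (-δ * |b - x| + γ * (|b| - x)) * (Real.sign (b - x) / 4 + γ / (4 * δ))
          + (if b < x then (1 : ℝ) else 0) / 2) * f b := by
  have hγ0 : 0 < γ := hγ ▸ sqrt_pos.2 (by positivity)
  have hγsq : γ ^ 2 = 2 * lam := hγ ▸ sq_sqrt (by positivity)
  have hδsq : δ ^ 2 = 2 * lam + 2 * θ * γ := hδ ▸ sq_sqrt (by positivity)
  have hθγ : 2 * γ * θ = δ ^ 2 - γ ^ 2 := by linarith
  have hγδ : γ < δ := by nlinarith [hδ ▸ sqrt_nonneg (2 * lam + 2 * θ * γ)]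
  have hfC : ∀ᵐ b, ‖f b‖ ≤ C := Eventually.of_forall hbd
  have hint₁ : Integrable fun b => exp (-δ * |b|) * f b :=
    (integrable_exp_neg_mul_abs (hγ0.trans hγδ)).mul_bdd hf.aestronglyMeasurable hfC
  have hint₂ : Integrable fun b => 1 / γ * exp (-γ * |b|) * condProbLt γ δ x b * f b :=
    (((integrable_exp_neg_mul_abs hγ0).const_mul (1 / γ)).mul_bdd
      (measurable_condProbLt γ δ x).aestronglyMeasurable
      (Eventually.of_forall (abs_condProbLt_le_one hγ0.le hγδ.le hx.le))).mul_bdd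
      hf.aestronglyMeasurable hfC
  have hpointwise : ∀ᵐ b, θ / (2 * δ) * (f b * ∫ y in Iic x, expAbsKernel γ δ b y)
      = 1 / γ * exp (-γ * |b|) * condProbLt γ δ x b * f b
        - 1 / (2 * δ) * (exp (-δ * |b|) * f b) := by
    filter_upwards [show ∀ᵐ b, b ≠ x by simp [ae_iff, measure_singleton]] with b hb
    linear_combination
      f b * condProbLt_density_identity hγ0 (hγ0.trans hγδ) hγδ.ne hθγ hx hb
  calc _ = 1 / (2 * δ) * (∫ b, exp (-δ * |b|) * f b)
          + ∫ b, (1 / γ * exp (-γ * |b|) * condProbLt γ δ x b * f b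
            - 1 / (2 * δ) * (exp (-δ * |b|) * f b)) := by
        rw [← integral_congr_ae hpointwise, integral_const_mul]
        rfl
    _ = ∫ b, 1 / γ * exp (-γ * |b|) * condProbLt γ δ x b * f b := by
        rw [integral_sub hint₂ (hint₁.const_mul _), integral_const_mul]
        ring
end

section
/- The Laplace transform (in t, with parameter λ) of the half-normal density f(t,x) = (θ√2/√(πt)) e^{-θ²x²/(2t)} (as a function of t, for fixed x ≥ 0) equals (1/λ)·θ√(2λ) e^{-θ√(2λ)·x}; i.e., ∫_0^∞ λ e^{-λt} (θ√2/√(πt)) e^{-θ²x²/(2t)} dt = θ√(2λ) e^{-θ√(2λ) x} for all λ > 0, x ≥ 0, θ > 0. -/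
/-! Substituting `t = u²` reduces the claim to `∫₀^∞ exp (-(a u² + c / u²)) du`. Completing the
square, `v² + b² / v² = (v - b / v)² + 2b`, and the Cauchy–Schlömilch substitution `w = v - b / v`
turn this into a Gaussian integral: `v ↦ b / v` exchanges the two summands of the Jacobian
`1 + b / v²`, so `∫₀^∞ g (v - b / v) dv = ½ ∫ g` for every even integrable `g`. -/

open MeasureTheory ProbabilityTheory Real Set Filter

section CauchySchlomilch

theorem hasDerivAt_const_div (b : ℝ) {v : ℝ} (hv : v ≠ 0) :
    HasDerivAt (fun v => b / v) (-(b / v ^ 2)) v :=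
  ((hasDerivAt_const v b).fun_div (hasDerivAt_id' v) hv).congr_deriv (by ring)

theorem hasDerivAt_sub_div (b : ℝ) {v : ℝ} (hv : v ≠ 0) :
    HasDerivAt (fun v => v - b / v) (1 + b / v ^ 2) v :=
  ((hasDerivAt_id' v).fun_sub (hasDerivAt_const_div b hv)).congr_deriv (by ring)

variable {E : Type*} [NormedAddCommGroup E] [NormedSpace ℝ E] {b : ℝ}

theorem strictMonoOn_sub_div (hb : 0 ≤ b) : StrictMonoOn (fun v => v - b / v) (Ioi 0) :=
  fun _ hu _ _ huv => by
    have := div_le_div_of_nonneg_left hb hu huv.le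
    dsimp only; linarith

theorem image_sub_div_Ioi (hb : 0 < b) : (fun v => v - b / v) '' Ioi 0 = univ := by
  refine eq_univ_of_forall fun w => ?_
  -- `v = (w + √(w² + 4b)) / 2` is the positive root of `v² - w v - b = 0`
  set s := √(w ^ 2 + 4 * b)
  have hs : s ^ 2 = w ^ 2 + 4 * b := sq_sqrt (by positivity)
  have hv : 0 < (w + s) / 2 := by nlinarith [sqrt_nonneg (w ^ 2 + 4 * b)]
  refine ⟨(w + s) / 2, hv, ?_⟩
  have hq : b / ((w + s) / 2) = (w + s) / 2 - w := by
    rw [div_eq_iff hv.ne']; nlinarith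
  simp only [hq]; ring

theorem integral_Ioi_comp_sub_div_smul (g : ℝ → E) (hb : 0 < b) :
    ∫ v in Ioi 0, (1 + b / v ^ 2) • g (v - b / v) = ∫ u, g u := by
  calc ∫ v in Ioi 0, (1 + b / v ^ 2) • g (v - b / v)
      = ∫ v in Ioi 0, |1 + b / v ^ 2| • g (v - b / v) :=
        setIntegral_congr_fun measurableSet_Ioi fun v _ => by rw [abs_of_pos (by positivity)]
    _ = ∫ u in (fun v => v - b / v) '' Ioi 0, g u :=
        (integral_image_eq_integral_abs_deriv_smul measurableSet_Ioi
          (fun v hv => (hasDerivAt_sub_div b (ne_of_gt hv)).hasDerivWithinAt)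
          (strictMonoOn_sub_div hb.le).injOn g).symm
    _ = ∫ u, g u := by rw [image_sub_div_Ioi hb, setIntegral_univ]

theorem integrableOn_Ioi_comp_sub_div_smul {g : ℝ → E} (hg : Integrable g) (hb : 0 < b) :
    IntegrableOn (fun v => (1 + b / v ^ 2) • g (v - b / v)) (Ioi 0) := by
  refine (integrableOn_image_iff_integrableOn_abs_deriv_smul measurableSet_Ioi
    (fun v hv => (hasDerivAt_sub_div b (ne_of_gt hv)).hasDerivWithinAt)
    (strictMonoOn_sub_div hb.le).injOn g).mp ?_ |>.congr_fun (fun v _ => ?_) measurableSet_Ioi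
  · rw [image_sub_div_Ioi hb]; exact hg.integrableOn
  · dsimp only; rw [abs_of_pos (by positivity)]

theorem integrableOn_Ioi_comp_sub_div {g : ℝ → E} (hg : Integrable g) (hb : 0 < b) :
    IntegrableOn (fun v => g (v - b / v)) (Ioi 0) := by
  -- the Jacobian `1 + b / v²` is at least `1`, so dividing it out preserves integrability
  have hbdd : ∀ v : ℝ, ‖(1 + b / v ^ 2)⁻¹‖ ≤ 1 := fun v => by
    rw [norm_inv, Real.norm_of_nonneg (by positivity)]
    exact inv_le_one_of_one_le₀ (le_add_of_nonneg_right (by positivity))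
  have hmeas : Measurable fun v : ℝ => (1 + b / v ^ 2)⁻¹ := by fun_prop
  have : IntegrableOn (fun v => (1 + b / v ^ 2)⁻¹ • (1 + b / v ^ 2) • g (v - b / v)) (Ioi 0) :=
    (integrableOn_Ioi_comp_sub_div_smul hg hb).bdd_smul 1 hmeas.aestronglyMeasurable
      (ae_of_all _ hbdd)
  refine this.congr_fun (fun v _ => ?_) measurableSet_Ioi
  dsimp only
  rw [smul_smul, inv_mul_cancel₀ (by positivity), one_smul]

/-- The Cauchy–Schlömilch transformation. -/
theorem integral_Ioi_comp_sub_div_of_even {g : ℝ → E} (hg : Integrable g)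
    (heven : ∀ u, g (-u) = g u) (hb : 0 < b) :
    ∫ v in Ioi 0, g (v - b / v) = (1 / 2 : ℝ) • ∫ u, g u := by
  set I := ∫ v in Ioi 0, g (v - b / v)
  -- `v ↦ b / v` maps `Ioi 0` to itself and sends `v - b / v` to its negative
  have hreflect : ∫ v in Ioi 0, (b / v ^ 2) • g (v - b / v) = I := by
    have himage : (fun v => b / v) '' Ioi 0 = Ioi 0 :=
      Subset.antisymm (image_subset_iff.mpr fun v hv => div_pos hb hv)
        fun w hw => ⟨b / w, div_pos hb hw, div_div_cancel₀ hb.ne'⟩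
    have hinj : InjOn (fun v => b / v) (Ioi 0) :=
      StrictAntiOn.injOn fun u hu _ _ huv => div_lt_div_of_pos_left hb hu huv
    have hchange := integral_image_eq_integral_abs_deriv_smul measurableSet_Ioi
      (fun v (hv : 0 < v) => (hasDerivAt_const_div b hv.ne').hasDerivWithinAt) hinj (fun w => g (w - b / w))
    rw [himage] at hchange
    refine Eq.trans ?_ hchange.symm
    refine setIntegral_congr_fun measurableSet_Ioi fun v (hv : 0 < v) => ?_
    rw [abs_neg, abs_of_pos (by positivity), div_div_cancel₀ hb.ne', ← neg_sub, heven]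
  have hsplit : ∫ v in Ioi 0, (b / v ^ 2) • g (v - b / v) = (∫ u, g u) - I := by
    rw [← integral_Ioi_comp_sub_div_smul g hb, ← integral_sub
      (integrableOn_Ioi_comp_sub_div_smul hg hb) (integrableOn_Ioi_comp_sub_div hg hb)]
    refine setIntegral_congr_fun measurableSet_Ioi fun v _ => ?_
    rw [add_smul, one_smul, add_sub_cancel_left]
  have hdouble : I + I = ∫ u, g u := eq_sub_iff_add_eq.mp (hreflect ▸ hsplit)
  rw [← hdouble, ← two_smul ℝ I, smul_smul]
  norm_num

end CauchySchlomilch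

theorem integral_Ioi_exp_neg_sq_add_sq_div_sq {b : ℝ} (hb : 0 ≤ b) :
    ∫ v in Ioi 0, exp (-(v ^ 2 + b ^ 2 / v ^ 2)) = √π / 2 * exp (-(2 * b)) := by
  rcases hb.eq_or_lt with rfl | hb
  · simpa using integral_gaussian_Ioi 1
  have hsquare : ∀ v ∈ Ioi (0 : ℝ),
      exp (-(v ^ 2 + b ^ 2 / v ^ 2)) = exp (-(2 * b)) * exp (-1 * (v - b / v) ^ 2) :=
    fun v (hv : 0 < v) => by
      rw [← exp_add]; congr 1; field_simp; ring
  have hgauss := integral_Ioi_comp_sub_div_of_even (integrable_exp_neg_mul_sq one_pos)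
    (fun u => by rw [neg_sq]) hb
  rw [setIntegral_congr_fun measurableSet_Ioi hsquare, integral_const_mul, hgauss,
    integral_gaussian, smul_eq_mul, div_one]
  ring

theorem integral_Ioi_exp_neg_mul_sq_add_div_sq {a c : ℝ} (ha : 0 < a) (hc : 0 ≤ c) :
    ∫ u in Ioi 0, exp (-(a * u ^ 2 + c / u ^ 2)) = √(π / a) / 2 * exp (-(2 * √(a * c))) := by
  have hsa : 0 < √a := sqrt_pos.mpr ha
  have hscale : ∀ u ∈ Ioi (0 : ℝ), exp (-(a * u ^ 2 + c / u ^ 2))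
      = exp (-((√a * u) ^ 2 + √(a * c) ^ 2 / (√a * u) ^ 2)) := fun u (hu : 0 < u) => by
    rw [mul_pow, sq_sqrt ha.le, sq_sqrt (by positivity)]
    field_simp
  rw [setIntegral_congr_fun measurableSet_Ioi hscale,
    integral_comp_mul_left_Ioi (fun v => exp (-(v ^ 2 + √(a * c) ^ 2 / v ^ 2))) 0 hsa, mul_zero,
    integral_Ioi_exp_neg_sq_add_sq_div_sq (sqrt_nonneg _), smul_eq_mul, sqrt_div' _ ha.le]
  ring

theorem integral_Ioi_exp_neg_mul_sub_div_div_sqrt {a c : ℝ} (ha : 0 < a) (hc : 0 ≤ c) :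
    ∫ t in Ioi 0, exp (-a * t - c / t) / √t = √(π / a) * exp (-(2 * √(a * c))) := by
  rw [← integral_comp_rpow_Ioi_of_pos two_pos]
  have hsubst : ∀ u ∈ Ioi (0 : ℝ),
      (2 * u ^ ((2 : ℝ) - 1)) • (exp (-a * u ^ (2 : ℝ) - c / u ^ (2 : ℝ)) / √(u ^ (2 : ℝ)))
        = 2 * exp (-(a * u ^ 2 + c / u ^ 2)) := fun u (hu : 0 < u) => by
    rw [rpow_two, sqrt_sq hu.le, smul_eq_mul, neg_add, ← sub_eq_add_neg, ← neg_mul]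
    norm_num
    field_simp
  rw [setIntegral_congr_fun measurableSet_Ioi hsubst, integral_const_mul,
    integral_Ioi_exp_neg_mul_sq_add_div_sq ha hc]
  ring

/-- Laplace transform of the half-normal density: the occupation time of `0` at an
independent exponential time is exponentially distributed with rate `θ√(2λ)`. -/
theorem halfNormal_laplace_transform (θ lam x : ℝ) (hθ : 0 < θ) (hlam : 0 < lam)
    (hx : 0 ≤ x) :
    ∫ t in Ioi (0 : ℝ),
        lam * Real.exp (-lam * t) * (θ * Real.sqrt 2 / Real.sqrt (π * t)) *
          Real.exp (-θ ^ 2 * x ^ 2 / (2 * t))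
      = θ * Real.sqrt (2 * lam) * Real.exp (-θ * Real.sqrt (2 * lam) * x) := by
  have hintegrand : ∀ t ∈ Ioi (0 : ℝ),
      lam * exp (-lam * t) * (θ * √2 / √(π * t)) * exp (-θ ^ 2 * x ^ 2 / (2 * t))
        = lam * θ * √2 / √π * (exp (-lam * t - θ ^ 2 * x ^ 2 / 2 / t) / √t) :=
    fun t (ht : 0 < t) => by
      rw [sqrt_mul pi_pos.le, sub_eq_add_neg, exp_add]
      field_simp
  have hexponent : 2 * √(lam * (θ ^ 2 * x ^ 2 / 2)) = θ * √(2 * lam) * x := by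
    have hsquare : lam * (θ ^ 2 * x ^ 2 / 2) = (θ * √(2 * lam) * x / 2) ^ 2 := by
      rw [div_pow, mul_pow, mul_pow, sq_sqrt (by positivity)]; ring
    rw [hsquare, sqrt_sq (by positivity)]
    ring
  rw [setIntegral_congr_fun measurableSet_Ioi hintegrand, integral_const_mul,
    integral_Ioi_exp_neg_mul_sub_div_div_sqrt hlam (by positivity), hexponent,
    sqrt_div' _ hlam.le, sqrt_mul' _ hlam.le, neg_mul, neg_mul]
  field_simp
  exact (sq_sqrt hlam.le).symm
end

section
/- Let S and Y be independent, with S having the law of |B_t| for a standard Brownian motion B (i.e., half-normal with scale √t) and Y standard normal. For θ > 0 and 0 < t < 1, as θ → ∞ the probability P( t − 1 + (2/θ)S + S²/Y² < 0 ) converges to P( S²/Y² < 1 − t ) = (2/π) arccos(√t), the Arcsine law tail. -/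
open MeasureTheory ProbabilityTheory Real Set Filter Topology

/-!
Since `S ≥ 0`, the events increase with `θ` to `{S²/Y² < 1 - t}`, so the limit is continuity
of measure from below. As `S² = t X²`, this limit event is `{(X, Y) ∈ B}` for a cone `B ⊆ ℝ²`.
In polar coordinates the standard Gaussian on `ℝ²` splits into a radial and a uniform angular
part, so it gives a cone its angular measure divided by `2π` (the radial factor is `1` because
the total mass is `1`). On the unit circle the condition defining `B` reads `sin² θ > t`, which
cuts out two arcs of total length `4 arccos √t`.
-/

lemma tendsto_measure_setOf_add_div_lt {Ω : Type*} [MeasurableSpace Ω] (μ : Measure Ω)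
    {f g : Ω → ℝ} (hg : ∀ ω, 0 ≤ g ω) (c : ℝ) :
    Tendsto (fun θ : ℝ => μ {ω | f ω + g ω / θ < c}) atTop (𝓝 (μ {ω | f ω < c})) := by
  have hpos : ∀ θ : ℝ, 0 < max θ 1 := fun θ => lt_max_of_lt_right one_pos
  -- `max θ 1` makes the family monotone on all of `ℝ` and agrees with `θ` eventually.
  set s : ℝ → Set Ω := fun θ => {ω | f ω + g ω / max θ 1 < c}
  have hmono : Monotone s := fun θ₁ θ₂ hθ ω (hω : f ω + g ω / max θ₁ 1 < c) =>
    show f ω + g ω / max θ₂ 1 < c from lt_of_le_of_lt (add_le_add_right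
      (div_le_div_of_nonneg_left (hg ω) (hpos θ₁) (max_le_max_right 1 hθ)) _) hω
  have hunion : ⋃ θ, s θ = {ω | f ω < c} := by
    ext ω
    simp only [s, mem_iUnion, mem_ofPred_eq]
    constructor
    · rintro ⟨θ, hθ⟩
      linarith [div_nonneg (hg ω) (hpos θ).le]
    · intro hω
      have hlim : Tendsto (fun θ : ℝ => f ω + g ω / θ) atTop (𝓝 (f ω)) := by
        simpa using tendsto_const_nhds.add ((tendsto_const_nhds (x := g ω)).div_atTop tendsto_id)
      obtain ⟨θ, hθ, hθ1⟩ :=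
        ((hlim.eventually (gt_mem_nhds hω)).and (eventually_ge_atTop 1)).exists
      exact ⟨θ, by rwa [max_eq_left hθ1]⟩
  refine (hunion ▸ tendsto_measure_iUnion_atTop hmono).congr' ?_
  filter_upwards [eventually_ge_atTop 1] with θ hθ
  simp only [Function.comp_apply, s, max_eq_left hθ]

lemma gaussianPDF_mul_gaussianPDF (x y : ℝ) :
    gaussianPDF 0 1 x * gaussianPDF 0 1 y
      = ENNReal.ofReal ((2 * π)⁻¹ * exp (-(x ^ 2 + y ^ 2) / 2)) := by
  rw [gaussianPDF, gaussianPDF, ← ENNReal.ofReal_mul (gaussianPDFReal_nonneg 0 1 x)]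
  congr 1
  simp only [gaussianPDFReal, NNReal.coe_one, mul_one, sub_zero]
  rw [mul_mul_mul_comm, ← mul_inv, mul_self_sqrt (by positivity), ← exp_add]
  ring_nf

lemma gaussianReal_prod_apply_cone_eq_mul {B : Set (ℝ × ℝ)} (hB : MeasurableSet B)
    (hcone : ∀ r : ℝ, 0 < r → ∀ p : ℝ × ℝ, r • p ∈ B ↔ p ∈ B) :
    ((gaussianReal 0 1).prod (gaussianReal 0 1)) B
      = (∫⁻ r in Ioi 0, ENNReal.ofReal (r * ((2 * π)⁻¹ * exp (-r ^ 2 / 2))))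
        * volume ((fun θ => (cos θ, sin θ)) ⁻¹' B ∩ Ioo (-π) π) := by
  have hT : MeasurableSet ((fun θ => (cos θ, sin θ)) ⁻¹' B) :=
    (by fun_prop : Measurable fun θ => (cos θ, sin θ)) hB
  rw [gaussianReal_of_var_ne_zero 0 one_ne_zero,
    prod_withDensity (measurable_gaussianPDF 0 1) (measurable_gaussianPDF 0 1),
    withDensity_apply _ hB, ← lintegral_indicator hB, ← Measure.volume_eq_prod,
    ← lintegral_comp_polarCoord_symm, ← Measure.restrict_apply hT, ← lintegral_indicator_one hT,
    ← lintegral_prod_mul (by fun_prop) (by fun_prop), Measure.prod_restrict,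
    ← Measure.volume_eq_prod]
  refine setLIntegral_congr_fun (s := Ioi 0 ×ˢ Ioo (-π) π)
    (measurableSet_Ioi.prod measurableSet_Ioo) ?_
  rintro ⟨r, θ⟩ ⟨hr, -⟩
  have hmem : (r * cos θ, r * sin θ) ∈ B ↔ (cos θ, sin θ) ∈ B := hcone r hr (cos θ, sin θ)
  set T := (fun θ => (cos θ, sin θ)) ⁻¹' B
  simp only [polarCoord_symm_apply, smul_eq_mul]
  by_cases h : θ ∈ T
  · have hsq : (r * cos θ) ^ 2 + (r * sin θ) ^ 2 = r ^ 2 := by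
      linear_combination r ^ 2 * sin_sq_add_cos_sq θ
    rw [indicator_of_mem (hmem.mpr h), indicator_of_mem h, gaussianPDF_mul_gaussianPDF, hsq,
      Pi.one_apply, mul_one, ENNReal.ofReal_mul hr.le]
  · rw [indicator_of_notMem (mt hmem.mp h), indicator_of_notMem h, mul_zero, mul_zero]

lemma gaussianReal_prod_apply_cone {B : Set (ℝ × ℝ)} (hB : MeasurableSet B)
    (hcone : ∀ r : ℝ, 0 < r → ∀ p : ℝ × ℝ, r • p ∈ B ↔ p ∈ B) :
    ((gaussianReal 0 1).prod (gaussianReal 0 1)) B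
      = volume ((fun θ => (cos θ, sin θ)) ⁻¹' B ∩ Ioo (-π) π) / ENNReal.ofReal (2 * π) := by
  -- The radial factor is pinned down by the total mass.
  have hmass := gaussianReal_prod_apply_cone_eq_mul MeasurableSet.univ fun _ _ _ => Iff.rfl
  rw [measure_univ, preimage_univ, univ_inter, volume_Ioo, sub_neg_eq_add, ← two_mul] at hmass
  rw [gaussianReal_prod_apply_cone_eq_mul hB hcone,
    ENNReal.eq_inv_of_mul_eq_one_left hmass.symm, div_eq_mul_inv, mul_comm]

lemma mul_cos_sq_div_sin_sq_lt_iff {t θ : ℝ} (ht : 0 < t) (ht1 : t < 1) (hθ : θ ∈ Ioo (-π) π)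
    (hθ0 : θ ≠ 0) :
    t * cos θ ^ 2 / sin θ ^ 2 < 1 - t ↔ |θ| ∈ Ioo (arcsin √t) (π - arcsin √t) := by
  set a := arcsin √t
  have hsin : sin θ ≠ 0 := fun h => hθ0 ((sin_eq_zero_iff_of_lt_of_lt hθ.1 hθ.2).mp h)
  have ha0 : 0 < a := arcsin_pos.mpr (sqrt_pos.mpr ht)
  have ha : a < π / 2 := arcsin_lt_pi_div_two.mpr ((sqrt_lt' one_pos).mpr (by rwa [one_pow]))
  have hcos_sq : cos a ^ 2 = 1 - t := by rw [cos_arcsin, sq_sqrt ht.le, sq_sqrt (by linarith)]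
  have hcos_pos : 0 < cos a := cos_pos_of_mem_Ioo ⟨by linarith, ha⟩
  have habs : |θ| ∈ Icc 0 π := ⟨abs_nonneg θ, (abs_lt.mpr hθ).le⟩
  calc t * cos θ ^ 2 / sin θ ^ 2 < 1 - t ↔ cos θ ^ 2 < cos a ^ 2 := by
        rw [div_lt_iff₀ (by positivity), sin_sq, hcos_sq]
        constructor <;> intro h <;> nlinarith
    _ ↔ cos (π - a) < cos |θ| ∧ cos |θ| < cos a := by
        rw [cos_abs, sq_lt_sq, abs_of_pos hcos_pos, abs_lt, cos_pi_sub]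
    _ ↔ |θ| ∈ Ioo a (π - a) := by
        rw [mem_Ioo, and_comm]
        exact and_congr (strictAntiOn_cos.lt_iff_gt habs ⟨ha0.le, by linarith⟩)
          (strictAntiOn_cos.lt_iff_gt ⟨by linarith, by linarith⟩ habs)

lemma volume_setOf_mul_cos_sq_div_sin_sq_lt {t : ℝ} (ht : 0 < t) (ht1 : t < 1) :
    volume ({θ | t * cos θ ^ 2 / sin θ ^ 2 < 1 - t} ∩ Ioo (-π) π)
      = ENNReal.ofReal (4 * arccos √t) := by
  set a := arcsin √t with ha_def
  have ha0 : 0 < a := arcsin_pos.mpr (sqrt_pos.mpr ht)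
  have ha : a < π / 2 := arcsin_lt_pi_div_two.mpr ((sqrt_lt' one_pos).mpr (by rwa [one_pow]))
  have hset : {θ | t * cos θ ^ 2 / sin θ ^ 2 < 1 - t} ∩ Ioo (-π) π
      = (Ioo (a - π) (-a) ∪ Ioo a (π - a)) ∪ {0} := by
    ext θ
    by_cases hθ0 : θ = 0
    · -- `0` belongs to both sides: `sin 0 = 0` and division by zero gives `0`.
      subst hθ0
      simp [pi_pos, ht1]
    · simp only [mem_inter_iff, mem_ofPred_eq, mem_union, mem_singleton_iff, hθ0, or_false]
      constructor
      · rintro ⟨h, hθ⟩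
        have := (mul_cos_sq_div_sin_sq_lt_iff ht ht1 hθ hθ0).mp h
        rcases abs_cases θ with ⟨hθa, -⟩ | ⟨hθa, -⟩ <;> rw [hθa, mem_Ioo] at this
        · exact Or.inr ⟨this.1, this.2⟩
        · exact Or.inl ⟨by linarith, by linarith⟩
      · intro h
        have hθ : θ ∈ Ioo (-π) π := by
          rcases h with h | h <;> exact ⟨by linarith [h.1], by linarith [h.2]⟩
        refine ⟨(mul_cos_sq_div_sin_sq_lt_iff ht ht1 hθ hθ0).mpr ?_, hθ⟩
        rcases h with h | h
        · rw [abs_of_neg (by linarith [h.2])]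
          exact ⟨by linarith [h.2], by linarith [h.1]⟩
        · rwa [abs_of_pos (by linarith [h.1])]
  have hdisj : Disjoint (Ioo (a - π) (-a)) (Ioo a (π - a)) :=
    disjoint_left.mpr fun x h₁ h₂ => by linarith [h₁.2, h₂.1]
  have hdisj0 : Disjoint (Ioo (a - π) (-a) ∪ Ioo a (π - a)) {0} := by
    rw [disjoint_singleton_right]
    rintro (h | h) <;> linarith [h.1, h.2]
  rw [hset, measure_union hdisj0 (measurableSet_singleton 0), measure_singleton, add_zero,
    measure_union hdisj measurableSet_Ioo, volume_Ioo, volume_Ioo,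
    ← ENNReal.ofReal_add (by linarith) (by linarith), arccos_eq_pi_div_two_sub_arcsin, ← ha_def]
  ring_nf

lemma gaussianReal_prod_setOf_mul_sq_div_sq_lt {t : ℝ} (ht : 0 < t) (ht1 : t < 1) :
    ((gaussianReal 0 1).prod (gaussianReal 0 1)) {p : ℝ × ℝ | t * p.1 ^ 2 / p.2 ^ 2 < 1 - t}
      = ENNReal.ofReal ((2 / π) * arccos √t) := by
  have hB : MeasurableSet {p : ℝ × ℝ | t * p.1 ^ 2 / p.2 ^ 2 < 1 - t} :=
    measurableSet_lt (by fun_prop) measurable_const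
  have hcone (r : ℝ) (hr : 0 < r) (p : ℝ × ℝ) :
      t * (r * p.1) ^ 2 / (r * p.2) ^ 2 < 1 - t ↔ t * p.1 ^ 2 / p.2 ^ 2 < 1 - t := by
    rw [mul_pow, mul_pow, mul_left_comm, mul_div_mul_left _ _ (by positivity)]
  calc _ = volume ({θ | t * cos θ ^ 2 / sin θ ^ 2 < 1 - t} ∩ Ioo (-π) π)
          / ENNReal.ofReal (2 * π) := gaussianReal_prod_apply_cone hB hcone
    _ = _ := by
      rw [volume_setOf_mul_cos_sq_div_sin_sq_lt ht ht1, ← ENNReal.ofReal_div_of_pos (by positivity)]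
      congr 1
      field_simp
      ring

/-- As `θ → ∞`, the sticky occupation-time probability converges to the Arcsine
law tail `P(S²/Y² < 1 - t) = (2/π) arccos(√t)`, where `S = √t·|X|` with `X, Y`
independent standard Gaussians. -/
theorem sticky_occupation_tendsto_arcsine {Ω : Type*} [MeasureSpace Ω]
    [IsProbabilityMeasure (ℙ : Measure Ω)]
    (t : ℝ) (ht : 0 < t) (ht1 : t < 1)
    (X Y : Ω → ℝ) (hX : Measurable X) (hY : Measurable Y)
    (hXlaw : Measure.map X ℙ = gaussianReal 0 1)
    (hYlaw : Measure.map Y ℙ = gaussianReal 0 1)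
    (hind : IndepFun X Y ℙ)
    (S : Ω → ℝ) (hS : S = fun ω => Real.sqrt t * |X ω|) :
    Tendsto (fun θ : ℝ => ℙ {ω | t - 1 + (2 / θ) * S ω + (S ω) ^ 2 / (Y ω) ^ 2 < 0})
        atTop (nhds (ℙ {ω | (S ω) ^ 2 / (Y ω) ^ 2 < 1 - t})) ∧
      ℙ {ω | (S ω) ^ 2 / (Y ω) ^ 2 < 1 - t}
        = ENNReal.ofReal ((2 / π) * Real.arccos (Real.sqrt t)) := by
  subst hS
  refine ⟨?_, ?_⟩
  · have hevent (θ : ℝ) : {ω | t - 1 + 2 / θ * (√t * |X ω|) + (√t * |X ω|) ^ 2 / Y ω ^ 2 < 0}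
        = {ω | (√t * |X ω|) ^ 2 / Y ω ^ 2 + 2 * (√t * |X ω|) / θ < 1 - t} := by
      ext ω
      simp only [mem_ofPred_eq, div_mul_eq_mul_div]
      constructor <;> intro h <;> linarith
    simp only [hevent]
    exact tendsto_measure_setOf_add_div_lt ℙ (fun ω => by positivity) (1 - t)
  · have hevent : {ω | (√t * |X ω|) ^ 2 / Y ω ^ 2 < 1 - t}
        = (fun ω => (X ω, Y ω)) ⁻¹' {p : ℝ × ℝ | t * p.1 ^ 2 / p.2 ^ 2 < 1 - t} := by
      ext ω
      simp only [mem_ofPred_eq, mem_preimage, mul_pow, sq_sqrt ht.le, sq_abs]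
    rw [hevent,
      ← Measure.map_apply (hX.prodMk hY) (measurableSet_lt (by fun_prop) measurable_const),
      hind.map_prod_eq_prod_map_map hX.aemeasurable hY.aemeasurable, hXlaw, hYlaw]
    exact gaussianReal_prod_setOf_mul_sq_div_sq_lt ht ht1
end
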